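/- For any register protocol and any target location qf, the set Pre*([qf]) of configurations from which a configuration containing qf is reachable is upward-closed with respect to the order ⪯. -/

import Mathlib

/-- Operation type of a register protocol: read or write. -/
inductive Op : Type
  | R : Op
  | W : Op
deriving DecidableEq

instance instFintypeOp : Fintype Op :=
  ⟨{Op.R, Op.W}, fun x => by cases x <;> simp⟩

/-- A location has at least one outgoing transition. -/
def Nonblock {Q D : Type*} (T : Set (Q × Op × D × Q)) : Prop :=
  ∀ q : Q, ∃ op d q', (q, op, d, q') ∈ T

/-- Whenever a read transition exists from `q`, reads of every datum are enabled in `q`. -/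
def ReadTotal {Q D : Type*} (T : Set (Q × Op × D × Q)) : Prop :=
  ∀ q d' q', (q, Op.R, d', q') ∈ T → ∀ d : D, ∃ qd, (q, Op.R, d, qd) ∈ T

/-- One step of the distributed system associated with transition set `T`:
a configuration is a pair of a finite multiset of locations and a register datum. -/
def IsStep {Q D : Type*} [DecidableEq Q] (T : Set (Q × Op × D × Q)) :
    Multiset Q × D → Multiset Q × D → Prop := fun γ γ' =>
  ∃ q op d'' q', (q, op, d'', q') ∈ T ∧ q ∈ γ.1 ∧
    γ'.1 = γ.1 - {q} + {q'} ∧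
    ((op = Op.R ∧ γ.2 = d'' ∧ γ'.2 = d'') ∨ (op = Op.W ∧ γ'.2 = d''))

/-- Reachability: reflexive-transitive closure of the step relation. -/
def Reach {Q D : Type*} [DecidableEq Q] (T : Set (Q × Op × D × Q)) :
    Multiset Q × D → Multiset Q × D → Prop :=
  Relation.ReflTransGen (IsStep T)

/-- `PostStar T S` is the set of configurations reachable from some configuration of `S`. -/
def PostStar {Q D : Type*} [DecidableEq Q] (T : Set (Q × Op × D × Q))
    (S : Set (Multiset Q × D)) : Set (Multiset Q × D) :=
  {γ' | ∃ γ ∈ S, Reach T γ γ'}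

/-- `PreStar T S` is the set of configurations from which some configuration of `S`
is reachable. -/
def PreStar {Q D : Type*} [DecidableEq Q] (T : Set (Q × Op × D × Q))
    (S : Set (Multiset Q × D)) : Set (Multiset Q × D) :=
  {γ | ∃ γ' ∈ S, Reach T γ γ'}

/-- `[qf]`: configurations containing at least one process in location `qf`. -/
def TargetSet {Q D : Type*} [DecidableEq Q] (qf : Q) : Set (Multiset Q × D) :=
  {γ | 0 < γ.1.count qf}

/-- The order `⪯` on configurations: same register content, same support,
and componentwise smaller multiset. -/
def ConfLE {Q D : Type*} [DecidableEq Q] (γ γ' : Multiset Q × D) : Prop :=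
  γ.2 = γ'.2 ∧ γ.1.toFinset = γ'.1.toFinset ∧ γ.1 ≤ γ'.1

/-- Upward closure of a set of configurations with respect to `⪯`. -/
def UpSet {Q D : Type*} [DecidableEq Q] (B : Set (Multiset Q × D)) :
    Set (Multiset Q × D) :=
  {γ' | ∃ γ ∈ B, ConfLE γ γ'}

/-! Extra processes can stay idle forever: every run `⟨μ, d⟩ →* ⟨μ', d'⟩` is also a run
`⟨μ + ν, d⟩ →* ⟨μ' + ν, d'⟩`, and `μ' + ν` still covers `qf` whenever `μ'` does. A larger
configuration for `⪯` is one with extra processes and the same register value. -/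

section Monotonicity

variable {Q D : Type*} [DecidableEq Q] {T : Set (Q × Op × D × Q)}

theorem IsStep.add_right {γ γ' : Multiset Q × D} (h : IsStep T γ γ') (ν : Multiset Q) :
    IsStep T (γ.1 + ν, γ.2) (γ'.1 + ν, γ'.2) := by
  obtain ⟨q, op, d, q', hT, hq, hμ', hreg⟩ := h
  refine ⟨q, op, d, q', hT, Multiset.mem_add.2 (Or.inl hq), ?_, hreg⟩
  rw [hμ', add_right_comm, tsub_add_eq_add_tsub (Multiset.singleton_le.2 hq)]

theorem Reach.add_right {γ γ' : Multiset Q × D} (h : Reach T γ γ') (ν : Multiset Q) :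
    Reach T (γ.1 + ν, γ.2) (γ'.1 + ν, γ'.2) :=
  Relation.ReflTransGen.lift (fun c : Multiset Q × D => (c.1 + ν, c.2))
    (fun _ _ hstep => IsStep.add_right hstep ν) _ _ h

end Monotonicity

theorem stmt_3_general {Q D : Type*} [DecidableEq Q]
    (T : Set (Q × Op × D × Q)) (qf : Q)
    (γ γ' : Multiset Q × D)
    (hγ : γ ∈ PreStar T (TargetSet qf)) (hle : ConfLE γ γ') :
    γ' ∈ PreStar T (TargetSet qf) := by
  obtain ⟨γt, hγt, hreach⟩ := hγ
  obtain ⟨hreg, -, hμ⟩ := hle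
  refine ⟨(γt.1 + (γ'.1 - γ.1), γt.2), ?_, ?_⟩
  · exact Nat.lt_add_right _ hγt |>.trans_eq (Multiset.count_add ..).symm
  · simpa only [add_tsub_cancel_of_le hμ, hreg] using hreach.add_right (γ'.1 - γ.1)

/-- `Pre*([qf])` is upward-closed for `⪯`. -/
theorem stmt_3 {Q D : Type*} [DecidableEq Q]
    (T : Set (Q × Op × D × Q)) (hnb : Nonblock T) (hrt : ReadTotal T) (qf : Q)
    (γ γ' : Multiset Q × D)
    (hγ : γ ∈ PreStar T (TargetSet qf)) (hle : ConfLE γ γ') :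
    γ' ∈ PreStar T (TargetSet qf) :=
  stmt_3_general T qf γ γ' hγ hle
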